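/- arXiv:1309.1254 — 2 statements merged into one kernel-verified Lean document; each statement's English description precedes it below -/
import Mathlib

section
/- In HA+NEM, for every decidable atomic predicate P and every closed instance P̄ of P, the term WIT_{P̄}^α is reducible of type ∃α ¬P̄: it is strongly normalizing, and for every numeral n, WIT_{P̄}^α ≻ (n,True) and True is reducible of the atomic type ¬P̄[n/α]. -/
/-! ### First-order arithmetic terms of the language L -/

inductive Trm : Type
  | var  : ℕ → Trm
  | zero : Trm
  | succ : Trm → Trm

/-- The numeral `S … S 0`. -/
def Trm.num : ℕ → Trm
  | 0 => .zero
  | n + 1 => .succ (Trm.num n)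

def Trm.eval (ρ : ℕ → ℕ) : Trm → ℕ
  | .var α => ρ α
  | .zero => 0
  | .succ t => Trm.eval ρ t + 1

/-- Substitution `t[m/α]` in first-order terms. -/
def Trm.subst (α : ℕ) (m : Trm) : Trm → Trm
  | .var β => if β = α then m else .var β
  | .zero => .zero
  | .succ t => .succ (Trm.subst α m t)

def Trm.fv : Trm → Set ℕ
  | .var α => {α}
  | .zero => ∅
  | .succ t => Trm.fv t

/-- A symbol for a primitive recursive (decidable) relation on ℕ,
    given by its boolean interpretation. -/
structure PredSym where
  interp : List ℕ → Bool

/-- `¬P`, the atomic predicate equivalent to the boolean negation of `P`. -/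
def PredSym.not (P : PredSym) : PredSym := ⟨fun l => ! P.interp l⟩

/-- The atomic formula `P(t₁,…,tₙ)` is true (under every environment;
    for closed instances this is ordinary truth). -/
def atomTrue (P : PredSym) (args : List Trm) : Prop :=
  ∀ ρ : ℕ → ℕ, P.interp (args.map (Trm.eval ρ)) = true

def atomFalse (P : PredSym) (args : List Trm) : Prop :=
  ∀ ρ : ℕ → ℕ, P.interp (args.map (Trm.eval ρ)) = false

/-! ### Formulas of HA -/

inductive Formula : Type
  | atom : PredSym → List Trm → Formula
  | and  : Formula → Formula → Formula
  | or   : Formula → Formula → Formula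
  | imp  : Formula → Formula → Formula
  | all  : ℕ → Formula → Formula
  | ex   : ℕ → Formula → Formula

/-- Substitution `A[m/α]` in formulas. -/
def Formula.subst (α : ℕ) (m : Trm) : Formula → Formula
  | .atom P args => .atom P (args.map (Trm.subst α m))
  | .and A B => .and (A.subst α m) (B.subst α m)
  | .or A B => .or (A.subst α m) (B.subst α m)
  | .imp A B => .imp (A.subst α m) (B.subst α m)
  | .all β A => if β = α then .all β A else .all β (A.subst α m)
  | .ex β A => if β = α then .ex β A else .ex β (A.subst α m)

/-- Free first-order variables of a formula. -/
def Formula.fv : Formula → Set ℕ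
  | .atom _ args => {β | ∃ t ∈ args, β ∈ t.fv}
  | .and A B => A.fv ∪ B.fv
  | .or A B => A.fv ∪ B.fv
  | .imp A B => A.fv ∪ B.fv
  | .all β A => A.fv \ {β}
  | .ex β A => A.fv \ {β}

def Formula.size : Formula → ℕ
  | .atom _ _ => 1
  | .and A B => A.size + B.size + 1
  | .or A B => A.size + B.size + 1
  | .imp A B => A.size + B.size + 1
  | .all _ A => A.size + 1
  | .ex _ A => A.size + 1

theorem Formula.size_subst (α : ℕ) (m : Trm) (A : Formula) :
    (A.subst α m).size = A.size := by
  induction A with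
  | atom P args => simp [Formula.subst, Formula.size]
  | and A B ihA ihB => simp [Formula.subst, Formula.size, ihA, ihB]
  | or A B ihA ihB => simp [Formula.subst, Formula.size, ihA, ihB]
  | imp A B ihA ihB => simp [Formula.subst, Formula.size, ihA, ihB]
  | all β A ih => by_cases h : β = α <;> simp [Formula.subst, Formula.size, h, ih]
  | ex β A ih => by_cases h : β = α <;> simp [Formula.subst, Formula.size, h, ih]
/-! ### Proof terms of HA + NEM -/

inductive PTm : Type
  | var     : ℕ → PTm                          -- x
  | app     : PTm → PTm → PTm                  -- t u
  | tapp    : PTm → Trm → PTm                  -- t m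
  | lam     : ℕ → PTm → PTm                    -- λx u
  | tlam    : ℕ → PTm → PTm                    -- λα u
  | pair    : PTm → PTm → PTm                  -- ⟨t,u⟩
  | proj    : Bool → PTm → PTm                 -- π₀ u / π₁ u
  | inj     : Bool → PTm → PTm                 -- ι₀(u) / ι₁(u)
  | case    : PTm → ℕ → PTm → ℕ → PTm → PTm    -- t[x.u, y.v]
  | exIntro : Trm → PTm → PTm                  -- (m, t)
  | exElim  : PTm → ℕ → ℕ → PTm → PTm          -- t[(α,x).u]
  | em      : PTm → PTm → PTm                  -- E(u,v)
  | hyp     : PredSym → List Trm → ℕ → PTm     -- HYP_P^α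
  | wit     : PredSym → List Trm → ℕ → PTm     -- WIT_P^α
  | tt      : PTm                              -- True
  | natrec  : PTm → PTm → Trm → PTm            -- rec u v m
  | const   : ℕ → PTm                          -- constant r (Post rules)

/-- Substitution `t[s/x]` of a proof term for a proof-term variable. -/
def PTm.psubst (x : ℕ) (s : PTm) : PTm → PTm
  | .var y => if y = x then s else .var y
  | .app t u => .app ((PTm.psubst x s t)) ((PTm.psubst x s u))
  | .tapp t m => .tapp ((PTm.psubst x s t)) m
  | .lam y u => if y = x then .lam y u else .lam y ((PTm.psubst x s u))
  | .tlam α u => .tlam α ((PTm.psubst x s u))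
  | .pair t u => .pair ((PTm.psubst x s t)) ((PTm.psubst x s u))
  | .proj i u => .proj i ((PTm.psubst x s u))
  | .inj i u => .inj i ((PTm.psubst x s u))
  | .case t y u z v =>
      .case ((PTm.psubst x s t)) y (if y = x then u else (PTm.psubst x s u))
        z (if z = x then v else (PTm.psubst x s v))
  | .exIntro m t => .exIntro m ((PTm.psubst x s t))
  | .exElim t α y u => .exElim ((PTm.psubst x s t)) α y (if y = x then u else (PTm.psubst x s u))
  | .em u v => .em ((PTm.psubst x s u)) ((PTm.psubst x s v))
  | .hyp P args α => .hyp P args α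
  | .wit P args α => .wit P args α
  | .tt => .tt
  | .natrec u v m => .natrec ((PTm.psubst x s u)) ((PTm.psubst x s v)) m
  | .const r => .const r

/-- Substitution `t[m/α]` of a first-order term for a first-order variable in a proof term. -/
def PTm.tsubst (α : ℕ) (m : Trm) : PTm → PTm
  | .var y => .var y
  | .app t u => .app ((PTm.tsubst α m t)) ((PTm.tsubst α m u))
  | .tapp t n => .tapp ((PTm.tsubst α m t)) (n.subst α m)
  | .lam y u => .lam y ((PTm.tsubst α m u))
  | .tlam β u => if β = α then .tlam β u else .tlam β ((PTm.tsubst α m u))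
  | .pair t u => .pair ((PTm.tsubst α m t)) ((PTm.tsubst α m u))
  | .proj i u => .proj i ((PTm.tsubst α m u))
  | .inj i u => .inj i ((PTm.tsubst α m u))
  | .case t y u z v => .case ((PTm.tsubst α m t)) y ((PTm.tsubst α m u)) z ((PTm.tsubst α m v))
  | .exIntro n t => .exIntro (n.subst α m) ((PTm.tsubst α m t))
  | .exElim t β y u =>
      .exElim ((PTm.tsubst α m t)) β y (if β = α then u else (PTm.tsubst α m u))
  | .em u v => .em ((PTm.tsubst α m u)) ((PTm.tsubst α m v))
  | .hyp P args β => if β = α then .hyp P args β else .hyp P (args.map (Trm.subst α m)) β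
  | .wit P args β => if β = α then .wit P args β else .wit P (args.map (Trm.subst α m)) β
  | .tt => .tt
  | .natrec u v n => .natrec ((PTm.tsubst α m u)) ((PTm.tsubst α m v)) (n.subst α m)
  | .const r => .const r

/-! ### The one-step reduction ≻ of HA + NEM -/

inductive NStep : PTm → PTm → Prop
  -- Reduction rules for HA
  | beta (x : ℕ) (u t : PTm) : NStep (.app (.lam x u) t) (PTm.psubst x t u)
  | tbeta (α : ℕ) (u : PTm) (m : Trm) : NStep (.tapp (.tlam α u) m) (PTm.tsubst α m u)
  | projPair (i : Bool) (u₀ u₁ : PTm) :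
      NStep (.proj i (.pair u₀ u₁)) (if i then u₁ else u₀)
  | caseInj₀ (u : PTm) (x₀ : ℕ) (t₀ : PTm) (x₁ : ℕ) (t₁ : PTm) :
      NStep (.case (.inj false u) x₀ t₀ x₁ t₁) (PTm.psubst x₀ u t₀)
  | caseInj₁ (u : PTm) (x₀ : ℕ) (t₀ : PTm) (x₁ : ℕ) (t₁ : PTm) :
      NStep (.case (.inj true u) x₀ t₀ x₁ t₁) (PTm.psubst x₁ u t₁)
  | exIE (n : ℕ) (u : PTm) (α x : ℕ) (v : PTm) :
      NStep (.exElim (.exIntro (Trm.num n) u) α x v) (PTm.psubst x u (PTm.tsubst α (Trm.num n) v))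
  | recZero (u v : PTm) : NStep (.natrec u v .zero) u
  | recSucc (u v : PTm) (n : ℕ) :
      NStep (.natrec u v (.succ (Trm.num n)))
            (.app (.tapp v (Trm.num n)) (.natrec u v (Trm.num n)))
  -- Permutation rules for NEM
  | permApp (u v w : PTm) : NStep (.app (.em u v) w) (.em (.app u w) (.app v w))
  | permTapp (u v : PTm) (m : Trm) : NStep (.tapp (.em u v) m) (.em (.tapp u m) (.tapp v m))
  | permProj (i : Bool) (u v : PTm) : NStep (.proj i (.em u v)) (.em (.proj i u) (.proj i v))
  | permCase (u v : PTm) (x : ℕ) (w₁ : PTm) (y : ℕ) (w₂ : PTm) :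
      NStep (.case (.em u v) x w₁ y w₂) (.em (.case u x w₁ y w₂) (.case v x w₁ y w₂))
  | permExElim (u v : PTm) (α x : ℕ) (w : PTm) :
      NStep (.exElim (.em u v) α x w) (.em (.exElim u α x w) (.exElim v α x w))
  -- Reduction rules for NEM
  | hypTrue (P : PredSym) (args : List Trm) (α : ℕ) (n : ℕ) :
      atomTrue P (args.map (Trm.subst α (Trm.num n))) →
      NStep (.tapp (.hyp P args α) (Trm.num n)) .tt
  | witIntro (P : PredSym) (args : List Trm) (α : ℕ) (n : ℕ) :
      NStep (.wit P args α) (.exIntro (Trm.num n) .tt)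
  | emL (u v : PTm) : NStep (.em u v) u
  | emR (u v : PTm) : NStep (.em u v) v
  -- Congruence (context closure)
  | congAppL {t t'} (u) : NStep t t' → NStep (.app t u) (.app t' u)
  | congAppR (t) {u u'} : NStep u u' → NStep (.app t u) (.app t u')
  | congTapp {t t'} (m) : NStep t t' → NStep (.tapp t m) (.tapp t' m)
  | congLam (x) {u u'} : NStep u u' → NStep (.lam x u) (.lam x u')
  | congTlam (α) {u u'} : NStep u u' → NStep (.tlam α u) (.tlam α u')
  | congPairL {t t'} (u) : NStep t t' → NStep (.pair t u) (.pair t' u)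
  | congPairR (t) {u u'} : NStep u u' → NStep (.pair t u) (.pair t u')
  | congProj (i) {u u'} : NStep u u' → NStep (.proj i u) (.proj i u')
  | congInj (i) {u u'} : NStep u u' → NStep (.inj i u) (.inj i u')
  | congCaseT {t t'} (x u y v) : NStep t t' → NStep (.case t x u y v) (.case t' x u y v)
  | congCaseL (t x) {u u'} (y v) : NStep u u' → NStep (.case t x u y v) (.case t x u' y v)
  | congCaseR (t x u y) {v v'} : NStep v v' → NStep (.case t x u y v) (.case t x u y v')
  | congExIntro (m) {t t'} : NStep t t' → NStep (.exIntro m t) (.exIntro m t')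
  | congExElimT {t t'} (α x u) : NStep t t' → NStep (.exElim t α x u) (.exElim t' α x u)
  | congExElimU (t α x) {u u'} : NStep u u' → NStep (.exElim t α x u) (.exElim t α x u')
  | congEmL {u u'} (v) : NStep u u' → NStep (.em u v) (.em u' v)
  | congEmR (u) {v v'} : NStep v v' → NStep (.em u v) (.em u v')
  | congRecU {u u'} (v m) : NStep u u' → NStep (.natrec u v m) (.natrec u' v m)
  | congRecV (u) {v v'} (m) : NStep v v' → NStep (.natrec u v m) (.natrec u v' m)

/-- `t ≻* t'`: zero or more reduction steps. -/
abbrev NSteps : PTm → PTm → Prop := Relation.ReflTransGen NStep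

/-- `t` is strongly normalizing w.r.t. ≻ (no infinite reduction sequence from `t`). -/
def NSN (t : PTm) : Prop := Acc (fun a b => NStep b a) t

/-- Neutral proof terms. -/
def Neutral : PTm → Prop
  | .lam _ _ => False
  | .tlam _ _ => False
  | .pair _ _ => False
  | .inj _ _ => False
  | .exIntro _ _ => False
  | .em _ _ => False
  | .hyp _ _ _ => False
  | _ => True

/-! ### Reducibility -/

/-- `Reducible C t`: "t is reducible of type C". -/
def Reducible : Formula → PTm → Prop
  | .atom _ _, t => NSN t
  | .and A B, t => Reducible A (.proj false t) ∧ Reducible B (.proj true t)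
  | .imp A B, t => ∀ u, Reducible A u → Reducible B (.app t u)
  | .or A B, t => NSN t ∧ (∀ u, NSteps t (.inj false u) → Reducible A u)
      ∧ (∀ u, NSteps t (.inj true u) → Reducible B u)
  | .all α A, t => ∀ n : Trm, Reducible (A.subst α n) (.tapp t n)
  | .ex α A, t => NSN t ∧ ∀ (n : Trm) (u : PTm), NSteps t (.exIntro n u) → Reducible (A.subst α n) u
termination_by A _ => A.size
decreasing_by all_goals simp only [Formula.size, Formula.size_subst] <;> omega
/-! ### Typing for HA + NEM -/

/-- A context entry: a proof-term variable declaration `x : A`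
    or an EM₁-hypothesis variable declaration `a : A`. -/
inductive CtxEntry : Type
  | pvar : ℕ → Formula → CtxEntry
  | hvar : ℕ → Formula → CtxEntry

abbrev Ctx : Type := List CtxEntry

def CtxEntry.isPvar : CtxEntry → Prop
  | .pvar _ _ => True
  | .hvar _ _ => False

def CtxEntry.formula : CtxEntry → Formula
  | .pvar _ A => A
  | .hvar _ A => A

def CtxEntry.fv (e : CtxEntry) : Set ℕ := e.formula.fv

/-- The proof term `r u₁ … uₙ` of a Post rule (`True` if `n = 0`). -/
def postTerm (r : ℕ) (us : List PTm) : PTm :=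
  if us.isEmpty then .tt else us.foldl PTm.app (.const r)

/-- The natural deduction system HA + NEM. -/
inductive NDeriv : Ctx → PTm → Formula → Prop
  | var {Γ : Ctx} {x : ℕ} {A : Formula} :
      CtxEntry.pvar x A ∈ Γ → NDeriv Γ (.var x) A
  | hypAx {Γ : Ctx} {a : ℕ} {P : PredSym} {args : List Trm} {α : ℕ} :
      CtxEntry.hvar a (.all α (.atom P args)) ∈ Γ →
      NDeriv Γ (.hyp P args α) (.all α (.atom P args))
  | witAx {Γ : Ctx} {a : ℕ} {P : PredSym} {args : List Trm} {α : ℕ} :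
      CtxEntry.hvar a (.ex α (.atom P.not args)) ∈ Γ →
      NDeriv Γ (.wit P args α) (.ex α (.atom P.not args))
  | andI {Γ u t A B} : NDeriv Γ u A → NDeriv Γ t B → NDeriv Γ (.pair u t) (.and A B)
  | andE₀ {Γ u A B} : NDeriv Γ u (.and A B) → NDeriv Γ (.proj false u) A
  | andE₁ {Γ u A B} : NDeriv Γ u (.and A B) → NDeriv Γ (.proj true u) B
  | impE {Γ t u A B} : NDeriv Γ t (.imp A B) → NDeriv Γ u A → NDeriv Γ (.app t u) B
  | impI {Γ x u A B} : NDeriv (CtxEntry.pvar x A :: Γ) u B → NDeriv Γ (.lam x u) (.imp A B)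
  | orI₀ {Γ u A B} : NDeriv Γ u A → NDeriv Γ (.inj false u) (.or A B)
  | orI₁ {Γ u A B} : NDeriv Γ u B → NDeriv Γ (.inj true u) (.or A B)
  | orE {Γ u x y w₁ w₂ A B C} :
      NDeriv Γ u (.or A B) → NDeriv (CtxEntry.pvar x A :: Γ) w₁ C →
      NDeriv (CtxEntry.pvar y B :: Γ) w₂ C → NDeriv Γ (.case u x w₁ y w₂) C
  | allE {Γ u α A} (m : Trm) : NDeriv Γ u (.all α A) → NDeriv Γ (.tapp u m) (A.subst α m)
  | allI {Γ u α A} :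
      NDeriv Γ u A → (∀ e ∈ Γ, α ∉ CtxEntry.fv e) → NDeriv Γ (.tlam α u) (.all α A)
  | exI {Γ u α A} (m : Trm) : NDeriv Γ u (A.subst α m) → NDeriv Γ (.exIntro m u) (.ex α A)
  | exE {Γ u t α x A C} :
      NDeriv Γ u (.ex α A) → NDeriv (CtxEntry.pvar x A :: Γ) t C →
      α ∉ Formula.fv C → (∀ e ∈ Γ, α ∉ CtxEntry.fv e) →
      NDeriv Γ (.exElim u α x t) C
  | ind {Γ u v α A} (m : Trm) :
      NDeriv Γ u (A.subst α .zero) →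
      NDeriv Γ v (.all α (.imp A (A.subst α (.succ (.var α))))) →
      NDeriv Γ (.natrec u v m) (A.subst α m)
  | post {Γ : Ctx} (r : ℕ) (Ps : List (PredSym × List Trm)) (P : PredSym)
      (args : List Trm) (us : List PTm) :
      (hlen : us.length = Ps.length) →
      (∀ (i : ℕ) (h₁ : i < us.length) (h₂ : i < Ps.length),
        NDeriv Γ (us.get ⟨i, h₁⟩) (.atom (Ps.get ⟨i, h₂⟩).1 (Ps.get ⟨i, h₂⟩).2)) →
      (∀ ρ : ℕ → ℕ, (∀ pa ∈ Ps, pa.1.interp (pa.2.map (Trm.eval ρ)) = true) →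
        P.interp (args.map (Trm.eval ρ)) = true) →
      NDeriv Γ (postTerm r us) (.atom P args)
  | nem {Γ w₁ w₂ C} {a : ℕ} {P : PredSym} {args : List Trm} {α : ℕ} :
      NDeriv (CtxEntry.hvar a (.all α (.atom P args)) :: Γ) w₁ C →
      NDeriv (CtxEntry.hvar a (.ex α (.atom P.not args)) :: Γ) w₂ C →
      NDeriv Γ (.em w₁ w₂) C
/-! ### Proof terms of HA + EM₁ (with hypothesis variables) -/

inductive EPTm : Type
  | var     : ℕ → EPTm
  | app     : EPTm → EPTm → EPTm
  | tapp    : EPTm → Trm → EPTm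
  | lam     : ℕ → EPTm → EPTm
  | tlam    : ℕ → EPTm → EPTm
  | pair    : EPTm → EPTm → EPTm
  | proj    : Bool → EPTm → EPTm
  | inj     : Bool → EPTm → EPTm
  | case    : EPTm → ℕ → EPTm → ℕ → EPTm → EPTm
  | exIntro : Trm → EPTm → EPTm
  | exElim  : EPTm → ℕ → ℕ → EPTm → EPTm
  | em      : ℕ → EPTm → EPTm → EPTm             -- E_a(u,v)
  | hyp     : ℕ → PredSym → List Trm → ℕ → EPTm  -- [a]HYP_P^α
  | wit     : ℕ → PredSym → List Trm → ℕ → EPTm  -- [a]WIT_P^α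
  | tt      : EPTm
  | natrec  : EPTm → EPTm → Trm → EPTm
  | const   : ℕ → EPTm

/-- Substitution `t[s/x]` of a proof term for a proof-term variable. -/
def EPTm.psubst (x : ℕ) (s : EPTm) : EPTm → EPTm
  | .var y => if y = x then s else .var y
  | .app t u => .app (EPTm.psubst x s t) (EPTm.psubst x s u)
  | .tapp t m => .tapp (EPTm.psubst x s t) m
  | .lam y u => if y = x then .lam y u else .lam y (EPTm.psubst x s u)
  | .tlam α u => .tlam α (EPTm.psubst x s u)
  | .pair t u => .pair (EPTm.psubst x s t) (EPTm.psubst x s u)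
  | .proj i u => .proj i (EPTm.psubst x s u)
  | .inj i u => .inj i (EPTm.psubst x s u)
  | .case t y u z v =>
      .case (EPTm.psubst x s t) y (if y = x then u else EPTm.psubst x s u)
        z (if z = x then v else EPTm.psubst x s v)
  | .exIntro m t => .exIntro m (EPTm.psubst x s t)
  | .exElim t α y u => .exElim (EPTm.psubst x s t) α y (if y = x then u else EPTm.psubst x s u)
  | .em a u v => .em a (EPTm.psubst x s u) (EPTm.psubst x s v)
  | .hyp a P args α => .hyp a P args α
  | .wit a P args α => .wit a P args α
  | .tt => .tt
  | .natrec u v m => .natrec (EPTm.psubst x s u) (EPTm.psubst x s v) m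
  | .const r => .const r

/-- Substitution `t[m/α]` of a first-order term in a proof term. -/
def EPTm.tsubst (α : ℕ) (m : Trm) : EPTm → EPTm
  | .var y => .var y
  | .app t u => .app (EPTm.tsubst α m t) (EPTm.tsubst α m u)
  | .tapp t n => .tapp (EPTm.tsubst α m t) (n.subst α m)
  | .lam y u => .lam y (EPTm.tsubst α m u)
  | .tlam β u => if β = α then .tlam β u else .tlam β (EPTm.tsubst α m u)
  | .pair t u => .pair (EPTm.tsubst α m t) (EPTm.tsubst α m u)
  | .proj i u => .proj i (EPTm.tsubst α m u)
  | .inj i u => .inj i (EPTm.tsubst α m u)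
  | .case t y u z v => .case (EPTm.tsubst α m t) y (EPTm.tsubst α m u) z (EPTm.tsubst α m v)
  | .exIntro n t => .exIntro (n.subst α m) (EPTm.tsubst α m t)
  | .exElim t β y u => .exElim (EPTm.tsubst α m t) β y (if β = α then u else EPTm.tsubst α m u)
  | .em a u v => .em a (EPTm.tsubst α m u) (EPTm.tsubst α m v)
  | .hyp a P args β => if β = α then .hyp a P args β else .hyp a P (args.map (Trm.subst α m)) β
  | .wit a P args β => if β = α then .wit a P args β else .wit a P (args.map (Trm.subst α m)) β
  | .tt => .tt
  | .natrec u v n => .natrec (EPTm.tsubst α m u) (EPTm.tsubst α m v) (n.subst α m)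
  | .const r => .const r

/-- `a` occurs free (as a hypothesis variable) in a term;
    `E_a(u,v)` binds `a` in both `u` and `v`. -/
def EPTm.hvFree (a : ℕ) : EPTm → Prop
  | .var _ => False
  | .app t u => EPTm.hvFree a t ∨ EPTm.hvFree a u
  | .tapp t _ => EPTm.hvFree a t
  | .lam _ u => EPTm.hvFree a u
  | .tlam _ u => EPTm.hvFree a u
  | .pair t u => EPTm.hvFree a t ∨ EPTm.hvFree a u
  | .proj _ u => EPTm.hvFree a u
  | .inj _ u => EPTm.hvFree a u
  | .case t _ u _ v => EPTm.hvFree a t ∨ EPTm.hvFree a u ∨ EPTm.hvFree a v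
  | .exIntro _ t => EPTm.hvFree a t
  | .exElim t _ _ u => EPTm.hvFree a t ∨ EPTm.hvFree a u
  | .em b u v => b ≠ a ∧ (EPTm.hvFree a u ∨ EPTm.hvFree a v)
  | .hyp b _ _ _ => b = a
  | .wit b _ _ _ => b = a
  | .tt => False
  | .natrec u v _ => EPTm.hvFree a u ∨ EPTm.hvFree a v
  | .const _ => False

/-- `[a]HYP_P^α n` occurs in the term (at a position where `a` is free). -/
def EPTm.occHypApp (a : ℕ) (P : PredSym) (args : List Trm) (β : ℕ) (n : ℕ) : EPTm → Prop
  | .var _ => False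
  | .app t u => EPTm.occHypApp a P args β n t ∨ EPTm.occHypApp a P args β n u
  | .tapp t m => (t = .hyp a P args β ∧ m = Trm.num n) ∨ EPTm.occHypApp a P args β n t
  | .lam _ u => EPTm.occHypApp a P args β n u
  | .tlam _ u => EPTm.occHypApp a P args β n u
  | .pair t u => EPTm.occHypApp a P args β n t ∨ EPTm.occHypApp a P args β n u
  | .proj _ u => EPTm.occHypApp a P args β n u
  | .inj _ u => EPTm.occHypApp a P args β n u
  | .case t _ u _ v =>
      EPTm.occHypApp a P args β n t ∨ EPTm.occHypApp a P args β n u ∨ EPTm.occHypApp a P args β n v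
  | .exIntro _ t => EPTm.occHypApp a P args β n t
  | .exElim t _ _ u => EPTm.occHypApp a P args β n t ∨ EPTm.occHypApp a P args β n u
  | .em b u v => b ≠ a ∧ (EPTm.occHypApp a P args β n u ∨ EPTm.occHypApp a P args β n v)
  | .hyp _ _ _ _ => False
  | .wit _ _ _ _ => False
  | .tt => False
  | .natrec u v _ => EPTm.occHypApp a P args β n u ∨ EPTm.occHypApp a P args β n v
  | .const _ => False

/-- `v[a := n]`: replace each subterm `[a]WIT_P^α` corresponding to a free
    occurrence of `a` by `(n, True)`. -/
def EPTm.witElim (a : ℕ) (n : ℕ) : EPTm → EPTm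
  | .var y => .var y
  | .app t u => .app (EPTm.witElim a n t) (EPTm.witElim a n u)
  | .tapp t m => .tapp (EPTm.witElim a n t) m
  | .lam y u => .lam y (EPTm.witElim a n u)
  | .tlam β u => .tlam β (EPTm.witElim a n u)
  | .pair t u => .pair (EPTm.witElim a n t) (EPTm.witElim a n u)
  | .proj i u => .proj i (EPTm.witElim a n u)
  | .inj i u => .inj i (EPTm.witElim a n u)
  | .case t y u z v => .case (EPTm.witElim a n t) y (EPTm.witElim a n u) z (EPTm.witElim a n v)
  | .exIntro m t => .exIntro m (EPTm.witElim a n t)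
  | .exElim t β y u => .exElim (EPTm.witElim a n t) β y (EPTm.witElim a n u)
  | .em b u v => if b = a then .em b u v else .em b (EPTm.witElim a n u) (EPTm.witElim a n v)
  | .hyp b P args β => .hyp b P args β
  | .wit b P args β => if b = a then .exIntro (Trm.num n) .tt else .wit b P args β
  | .tt => .tt
  | .natrec u v m => .natrec (EPTm.witElim a n u) (EPTm.witElim a n v) m
  | .const r => .const r

/-! ### The one-step reduction ↦ of HA + EM₁ -/

inductive EStep : EPTm → EPTm → Prop
  -- Reduction rules for HA
  | beta (x : ℕ) (u t : EPTm) : EStep (.app (.lam x u) t) (EPTm.psubst x t u)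
  | tbeta (α : ℕ) (u : EPTm) (m : Trm) : EStep (.tapp (.tlam α u) m) (EPTm.tsubst α m u)
  | projPair (i : Bool) (u₀ u₁ : EPTm) :
      EStep (.proj i (.pair u₀ u₁)) (if i then u₁ else u₀)
  | caseInj₀ (u : EPTm) (x₀ : ℕ) (t₀ : EPTm) (x₁ : ℕ) (t₁ : EPTm) :
      EStep (.case (.inj false u) x₀ t₀ x₁ t₁) (EPTm.psubst x₀ u t₀)
  | caseInj₁ (u : EPTm) (x₀ : ℕ) (t₀ : EPTm) (x₁ : ℕ) (t₁ : EPTm) :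
      EStep (.case (.inj true u) x₀ t₀ x₁ t₁) (EPTm.psubst x₁ u t₁)
  | exIE (n : ℕ) (u : EPTm) (α x : ℕ) (v : EPTm) :
      EStep (.exElim (.exIntro (Trm.num n) u) α x v)
            (EPTm.psubst x u (EPTm.tsubst α (Trm.num n) v))
  | recZero (u v : EPTm) : EStep (.natrec u v .zero) u
  | recSucc (u v : EPTm) (n : ℕ) :
      EStep (.natrec u v (.succ (Trm.num n)))
            (.app (.tapp v (Trm.num n)) (.natrec u v (Trm.num n)))
  -- Permutation rules for EM₁
  | permApp (a : ℕ) (u v w : EPTm) : EStep (.app (.em a u v) w) (.em a (.app u w) (.app v w))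
  | permTapp (a : ℕ) (u v : EPTm) (m : Trm) :
      EStep (.tapp (.em a u v) m) (.em a (.tapp u m) (.tapp v m))
  | permProj (a : ℕ) (i : Bool) (u v : EPTm) :
      EStep (.proj i (.em a u v)) (.em a (.proj i u) (.proj i v))
  | permCase (a : ℕ) (u v : EPTm) (x : ℕ) (w₁ : EPTm) (y : ℕ) (w₂ : EPTm) :
      EStep (.case (.em a u v) x w₁ y w₂) (.em a (.case u x w₁ y w₂) (.case v x w₁ y w₂))
  | permExElim (a : ℕ) (u v : EPTm) (α x : ℕ) (w : EPTm) :
      EStep (.exElim (.em a u v) α x w) (.em a (.exElim u α x w) (.exElim v α x w))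
  -- Reduction rules for EM₁
  | hypTrue (a : ℕ) (P : PredSym) (args : List Trm) (α : ℕ) (n : ℕ) :
      atomTrue P (args.map (Trm.subst α (Trm.num n))) →
      EStep (.tapp (.hyp a P args α) (Trm.num n)) .tt
  | emSimp (a : ℕ) (u v : EPTm) : ¬ EPTm.hvFree a u → EStep (.em a u v) u
  | emRaise (a : ℕ) (u v : EPTm) (P : PredSym) (args : List Trm) (α : ℕ) (n : ℕ) :
      EPTm.occHypApp a P args α n u →
      atomFalse P (args.map (Trm.subst α (Trm.num n))) →
      EStep (.em a u v) (EPTm.witElim a n v)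
  -- Congruence (context closure)
  | congAppL {t t'} (u) : EStep t t' → EStep (.app t u) (.app t' u)
  | congAppR (t) {u u'} : EStep u u' → EStep (.app t u) (.app t u')
  | congTapp {t t'} (m) : EStep t t' → EStep (.tapp t m) (.tapp t' m)
  | congLam (x) {u u'} : EStep u u' → EStep (.lam x u) (.lam x u')
  | congTlam (α) {u u'} : EStep u u' → EStep (.tlam α u) (.tlam α u')
  | congPairL {t t'} (u) : EStep t t' → EStep (.pair t u) (.pair t' u)
  | congPairR (t) {u u'} : EStep u u' → EStep (.pair t u) (.pair t u')
  | congProj (i) {u u'} : EStep u u' → EStep (.proj i u) (.proj i u')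
  | congInj (i) {u u'} : EStep u u' → EStep (.inj i u) (.inj i u')
  | congCaseT {t t'} (x u y v) : EStep t t' → EStep (.case t x u y v) (.case t' x u y v)
  | congCaseL (t x) {u u'} (y v) : EStep u u' → EStep (.case t x u y v) (.case t x u' y v)
  | congCaseR (t x u y) {v v'} : EStep v v' → EStep (.case t x u y v) (.case t x u y v')
  | congExIntro (m) {t t'} : EStep t t' → EStep (.exIntro m t) (.exIntro m t')
  | congExElimT {t t'} (α x u) : EStep t t' → EStep (.exElim t α x u) (.exElim t' α x u)
  | congExElimU (t α x) {u u'} : EStep u u' → EStep (.exElim t α x u) (.exElim t α x u')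
  | congEmL (a) {u u'} (v) : EStep u u' → EStep (.em a u v) (.em a u' v)
  | congEmR (a u) {v v'} : EStep v v' → EStep (.em a u v) (.em a u v')
  | congRecU {u u'} (v m) : EStep u u' → EStep (.natrec u v m) (.natrec u' v m)
  | congRecV (u) {v v'} (m) : EStep v v' → EStep (.natrec u v m) (.natrec u v' m)

/-- `t` is strongly normalizing w.r.t. ↦. -/
def ESN (t : EPTm) : Prop := Acc (fun a b => EStep b a) t

/-- The translation ⟨·⟩ from HA + EM₁ proof terms to HA + NEM proof terms:
    erase every `[a]` and replace each `E_a` by `E`. -/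
def EPTm.transl : EPTm → PTm
  | .var x => .var x
  | .app t u => .app (EPTm.transl t) (EPTm.transl u)
  | .tapp t m => .tapp (EPTm.transl t) m
  | .lam x u => .lam x (EPTm.transl u)
  | .tlam α u => .tlam α (EPTm.transl u)
  | .pair t u => .pair (EPTm.transl t) (EPTm.transl u)
  | .proj i u => .proj i (EPTm.transl u)
  | .inj i u => .inj i (EPTm.transl u)
  | .case t x u y v => .case (EPTm.transl t) x (EPTm.transl u) y (EPTm.transl v)
  | .exIntro m t => .exIntro m (EPTm.transl t)
  | .exElim t α x u => .exElim (EPTm.transl t) α x (EPTm.transl u)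
  | .em _ u v => .em (EPTm.transl u) (EPTm.transl v)
  | .hyp _ P args α => .hyp P args α
  | .wit _ P args α => .wit P args α
  | .tt => .tt
  | .natrec u v m => .natrec (EPTm.transl u) (EPTm.transl v) m
  | .const r => .const r

/-- The proof term `r u₁ … uₙ` of a Post rule in HA + EM₁. -/
def epostTerm (r : ℕ) (us : List EPTm) : EPTm :=
  if us.isEmpty then .tt else us.foldl EPTm.app (.const r)

/-- The natural deduction system HA + EM₁. -/
inductive EDeriv : Ctx → EPTm → Formula → Prop
  | var {Γ : Ctx} {x : ℕ} {A : Formula} :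
      CtxEntry.pvar x A ∈ Γ → EDeriv Γ (.var x) A
  | hypAx {Γ : Ctx} {a : ℕ} {P : PredSym} {args : List Trm} {α : ℕ} :
      CtxEntry.hvar a (.all α (.atom P args)) ∈ Γ →
      EDeriv Γ (.hyp a P args α) (.all α (.atom P args))
  | witAx {Γ : Ctx} {a : ℕ} {P : PredSym} {args : List Trm} {α : ℕ} :
      CtxEntry.hvar a (.ex α (.atom P.not args)) ∈ Γ →
      EDeriv Γ (.wit a P args α) (.ex α (.atom P.not args))
  | andI {Γ u t A B} : EDeriv Γ u A → EDeriv Γ t B → EDeriv Γ (.pair u t) (.and A B)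
  | andE₀ {Γ u A B} : EDeriv Γ u (.and A B) → EDeriv Γ (.proj false u) A
  | andE₁ {Γ u A B} : EDeriv Γ u (.and A B) → EDeriv Γ (.proj true u) B
  | impE {Γ t u A B} : EDeriv Γ t (.imp A B) → EDeriv Γ u A → EDeriv Γ (.app t u) B
  | impI {Γ x u A B} : EDeriv (CtxEntry.pvar x A :: Γ) u B → EDeriv Γ (.lam x u) (.imp A B)
  | orI₀ {Γ u A B} : EDeriv Γ u A → EDeriv Γ (.inj false u) (.or A B)
  | orI₁ {Γ u A B} : EDeriv Γ u B → EDeriv Γ (.inj true u) (.or A B)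
  | orE {Γ u x y w₁ w₂ A B C} :
      EDeriv Γ u (.or A B) → EDeriv (CtxEntry.pvar x A :: Γ) w₁ C →
      EDeriv (CtxEntry.pvar y B :: Γ) w₂ C → EDeriv Γ (.case u x w₁ y w₂) C
  | allE {Γ u α A} (m : Trm) : EDeriv Γ u (.all α A) → EDeriv Γ (.tapp u m) (A.subst α m)
  | allI {Γ u α A} :
      EDeriv Γ u A → (∀ e ∈ Γ, α ∉ CtxEntry.fv e) → EDeriv Γ (.tlam α u) (.all α A)
  | exI {Γ u α A} (m : Trm) : EDeriv Γ u (A.subst α m) → EDeriv Γ (.exIntro m u) (.ex α A)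
  | exE {Γ u t α x A C} :
      EDeriv Γ u (.ex α A) → EDeriv (CtxEntry.pvar x A :: Γ) t C →
      α ∉ Formula.fv C → (∀ e ∈ Γ, α ∉ CtxEntry.fv e) →
      EDeriv Γ (.exElim u α x t) C
  | ind {Γ u v α A} (m : Trm) :
      EDeriv Γ u (A.subst α .zero) →
      EDeriv Γ v (.all α (.imp A (A.subst α (.succ (.var α))))) →
      EDeriv Γ (.natrec u v m) (A.subst α m)
  | post {Γ : Ctx} (r : ℕ) (Ps : List (PredSym × List Trm)) (P : PredSym)
      (args : List Trm) (us : List EPTm) :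
      (hlen : us.length = Ps.length) →
      (∀ (i : ℕ) (h₁ : i < us.length) (h₂ : i < Ps.length),
        EDeriv Γ (us.get ⟨i, h₁⟩) (.atom (Ps.get ⟨i, h₂⟩).1 (Ps.get ⟨i, h₂⟩).2)) →
      (∀ ρ : ℕ → ℕ, (∀ pa ∈ Ps, pa.1.interp (pa.2.map (Trm.eval ρ)) = true) →
        P.interp (args.map (Trm.eval ρ)) = true) →
      EDeriv Γ (epostTerm r us) (.atom P args)
  | em₁ {Γ w₁ w₂ C} {a : ℕ} {P : PredSym} {args : List Trm} {α : ℕ} :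
      EDeriv (CtxEntry.hvar a (.all α (.atom P args)) :: Γ) w₁ C →
      EDeriv (CtxEntry.hvar a (.ex α (.atom P.not args)) :: Γ) w₂ C →
      EDeriv Γ (.em a w₁ w₂) C

lemma tt_no_step {t : PTm} (h : NStep .tt t) : False := by cases h

lemma NSN_tt : NSN PTm.tt :=
  Acc.intro _ (fun _ h => absurd h tt_no_step)

lemma exIntro_tt_inv {m : Trm} {u : PTm} (h : NStep (.exIntro m .tt) u) : False := by
  cases h with
  | congExIntro _ h' => exact tt_no_step h'

lemma NSN_exIntro_tt (m : Trm) : NSN (.exIntro m .tt) :=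
  Acc.intro _ (fun _ h => absurd h exIntro_tt_inv)

lemma wit_inv {P : PredSym} {args : List Trm} {α : ℕ} {u : PTm}
    (h : NStep (.wit P args α) u) : ∃ n : ℕ, u = .exIntro (Trm.num n) .tt := by
  cases h with
  | witIntro P args α n => exact ⟨n, rfl⟩

lemma NSN_wit (P : PredSym) (args : List Trm) (α : ℕ) : NSN (.wit P args α) := by
  refine Acc.intro _ (fun u h => ?_)
  obtain ⟨n, rfl⟩ := wit_inv h
  exact NSN_exIntro_tt _

lemma wit_steps_inv {P : PredSym} {args : List Trm} {α : ℕ} {m : Trm} {u : PTm}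
    (h : NSteps (.wit P args α) (.exIntro m u)) : u = .tt := by
  rcases (Relation.ReflTransGen.cases_head h) with heq | ⟨v, h1, h2⟩
  · exact absurd heq (by simp)
  · obtain ⟨n, rfl⟩ := wit_inv h1
    rcases (Relation.ReflTransGen.cases_head h2) with heq | ⟨w, h3, _⟩
    · injection heq with _ h; exact h.symm
    · exact absurd h3 exIntro_tt_inv

/-- for every decidable atomic predicate P and closed instance
    P̄ of P, WIT_P̄^α is reducible of type ∃α ¬P̄: it is strongly
    normalizing, and for every numeral n, WIT_P̄^α ≻ (n, True) and True is
    reducible of the atomic type ¬P̄[n/α]. -/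
theorem wit_reducible (P : PredSym) (args : List Trm) (α : ℕ)
    (hclosed : ∀ t ∈ args, Trm.fv t ⊆ {α}) :
    Reducible (.ex α (.atom P.not args)) (.wit P args α) ∧
    NSN (.wit P args α) ∧
    ∀ n : ℕ, NStep (.wit P args α) (.exIntro (Trm.num n) .tt) ∧
      Reducible (Formula.subst α (Trm.num n) (.atom P.not args)) PTm.tt := by
  have hred : Reducible (.ex α (.atom P.not args)) (.wit P args α) := by
    simp only [Reducible]
    refine ⟨NSN_wit P args α, fun n u h => ?_⟩
    have : u = .tt := wit_steps_inv h
    subst this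
    simp only [Formula.subst, Reducible]
    exact NSN_tt
  refine ⟨hred, NSN_wit P args α, fun n => ⟨NStep.witIntro P args α n, ?_⟩⟩
  simp only [Formula.subst, Reducible]
  exact NSN_tt
end

section
/- In HA+NEM, if u is reducible of type B(0) and for every arithmetic term m, the term vm is reducible of type B(m)→B(S m), then for every numeral n the term rec u v n is reducible of type B(n). -/
/-! ### Auxiliary lemmas for the reducibility method -/

lemma red_atom {P l t} : Reducible (.atom P l) t ↔ NSN t := by rw [Reducible]

lemma red_and {A B t} : Reducible (.and A B) t ↔
    Reducible A (.proj false t) ∧ Reducible B (.proj true t) := by rw [Reducible]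

lemma red_imp {A B t} : Reducible (.imp A B) t ↔
    ∀ u, Reducible A u → Reducible B (.app t u) := by rw [Reducible]

lemma red_or {A B t} : Reducible (.or A B) t ↔
    NSN t ∧ (∀ u, NSteps t (.inj false u) → Reducible A u)
      ∧ (∀ u, NSteps t (.inj true u) → Reducible B u) := by rw [Reducible]

lemma red_all {α A t} : Reducible (.all α A) t ↔
    ∀ n : Trm, Reducible (A.subst α n) (.tapp t n) := by rw [Reducible]

lemma red_ex {α A t} : Reducible (.ex α A) t ↔
    NSN t ∧ ∀ (n : Trm) (u : PTm), NSteps t (.exIntro n u) →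
      Reducible (A.subst α n) u := by rw [Reducible]

lemma nsn_step {t t' : PTm} (h : NSN t) (s : NStep t t') : NSN t' := h.inv s

lemma nsn_of_image (f : PTm → PTm) (hf : ∀ {a b : PTm}, NStep a b → NStep (f a) (f b)) :
    ∀ t, NSN (f t) → NSN t := by
  have key : ∀ s, Acc (fun a b => NStep b a) s → ∀ t, s = f t → NSN t := by
    intro s hs
    induction hs with
    | intro s _ ih =>
      rintro t rfl
      exact Acc.intro t fun t' hstep => ih (f t') (hf hstep) t' rfl
  exact fun t h => key (f t) h t rfl

/-- CR1, CR2, CR3 for every formula. -/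
theorem CR (A : Formula) :
    (∀ t, Reducible A t → NSN t) ∧
    (∀ t t', Reducible A t → NStep t t' → Reducible A t') ∧
    (∀ t, Neutral t → (∀ t', NStep t t' → Reducible A t') → Reducible A t) := by
  cases A with
  | atom P args =>
    refine ⟨fun t h => red_atom.mp h, fun t t' h s => red_atom.mpr ((red_atom.mp h).inv s),
      fun t _ h => red_atom.mpr (Acc.intro t fun t' s => red_atom.mp (h t' s))⟩
  | and A B =>
    obtain ⟨CR1A, CR2A, CR3A⟩ := CR A
    obtain ⟨CR1B, CR2B, CR3B⟩ := CR B
    refine ⟨?_, ?_, ?_⟩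
    · intro t h
      exact nsn_of_image (fun s => .proj false s) (fun hs => .congProj _ hs) t
        (CR1A _ (red_and.mp h).1)
    · intro t t' h s
      exact red_and.mpr ⟨CR2A _ _ (red_and.mp h).1 (.congProj _ s),
        CR2B _ _ (red_and.mp h).2 (.congProj _ s)⟩
    · intro t ht h
      refine red_and.mpr ⟨CR3A _ trivial ?_, CR3B _ trivial ?_⟩
      · intro t' s
        cases s with
        | projPair i u₀ u₁ => simp [Neutral] at ht
        | permProj i u v => simp [Neutral] at ht
        | congProj i hs => exact (red_and.mp (h _ hs)).1
      · intro t' s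
        cases s with
        | projPair i u₀ u₁ => simp [Neutral] at ht
        | permProj i u v => simp [Neutral] at ht
        | congProj i hs => exact (red_and.mp (h _ hs)).2
  | imp A B =>
    obtain ⟨CR1A, CR2A, CR3A⟩ := CR A
    obtain ⟨CR1B, CR2B, CR3B⟩ := CR B
    refine ⟨?_, ?_, ?_⟩
    · intro t h
      have hvar : Reducible A (.var 0) := CR3A _ trivial (fun t' s => nomatch s)
      exact nsn_of_image (fun s => .app s (.var 0)) (fun hs => .congAppL _ hs) t
        (CR1B _ (red_imp.mp h _ hvar))
    · intro t t' h s
      exact red_imp.mpr fun u hu => CR2B _ _ (red_imp.mp h u hu) (.congAppL u s)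
    · intro t ht h
      refine red_imp.mpr fun u hu => ?_
      have aux : ∀ u, NSN u → Reducible A u → Reducible B (.app t u) := by
        intro u hsnu
        induction hsnu with
        | intro u _ ih =>
          intro hu
          refine CR3B _ trivial ?_
          intro s hs
          cases hs with
          | beta x w => simp [Neutral] at ht
          | permApp a b c => simp [Neutral] at ht
          | congAppL _ hstep => exact red_imp.mp (h _ hstep) u hu
          | congAppR _ hstep => exact ih _ hstep (CR2A _ _ hu hstep)
      exact aux u (CR1A u hu) hu
  | or A B =>
    obtain ⟨CR1A, CR2A, CR3A⟩ := CR A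
    obtain ⟨CR1B, CR2B, CR3B⟩ := CR B
    refine ⟨?_, ?_, ?_⟩
    · intro t h; exact (red_or.mp h).1
    · intro t t' h s
      obtain ⟨h1, h2, h3⟩ := red_or.mp h
      exact red_or.mpr ⟨h1.inv s, fun w hw => h2 w (hw.head s), fun w hw => h3 w (hw.head s)⟩
    · intro t ht h
      refine red_or.mpr ⟨Acc.intro t fun t' s => (red_or.mp (h t' s)).1, ?_, ?_⟩
      · intro w hw
        rcases hw.cases_head with heq | ⟨s, hs, hrest⟩
        · rw [heq] at ht; simp [Neutral] at ht
        · exact (red_or.mp (h s hs)).2.1 w hrest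
      · intro w hw
        rcases hw.cases_head with heq | ⟨s, hs, hrest⟩
        · rw [heq] at ht; simp [Neutral] at ht
        · exact (red_or.mp (h s hs)).2.2 w hrest
  | all β A =>
    refine ⟨?_, ?_, ?_⟩
    · intro t h
      exact nsn_of_image (fun s => .tapp s .zero) (fun hs => .congTapp _ hs) t
        ((CR (A.subst β .zero)).1 _ (red_all.mp h .zero))
    · intro t t' h s
      exact red_all.mpr fun n => (CR (A.subst β n)).2.1 _ _ (red_all.mp h n) (.congTapp n s)
    · intro t ht h
      refine red_all.mpr fun n => (CR (A.subst β n)).2.2 _ trivial ?_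
      intro s hs
      cases hs with
      | tbeta => simp [Neutral] at ht
      | permTapp => simp [Neutral] at ht
      | hypTrue => simp [Neutral] at ht
      | congTapp _ hstep => exact red_all.mp (h _ hstep) n
  | ex β A =>
    refine ⟨?_, ?_, ?_⟩
    · intro t h; exact (red_ex.mp h).1
    · intro t t' h s
      obtain ⟨h1, h2⟩ := red_ex.mp h
      exact red_ex.mpr ⟨h1.inv s, fun n w hw => h2 n w (hw.head s)⟩
    · intro t ht h
      refine red_ex.mpr ⟨Acc.intro t fun t' s => (red_ex.mp (h t' s)).1, ?_⟩
      intro n w hw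
      rcases hw.cases_head with heq | ⟨s, hs, hrest⟩
      · rw [heq] at ht; simp [Neutral] at ht
      · exact (red_ex.mp (h s hs)).2 n w hrest
termination_by A.size
decreasing_by all_goals simp only [Formula.size, Formula.size_subst] <;> omega

lemma Trm.num_inj : ∀ {k n : ℕ}, Trm.num k = Trm.num n → k = n := by
  intro k
  induction k with
  | zero => intro n h; cases n with
    | zero => rfl
    | succ n => simp [Trm.num] at h
  | succ k ih => intro n h; cases n with
    | zero => simp [Trm.num] at h
    | succ n => simp [Trm.num] at h; exact congrArg Nat.succ (ih h)

lemma rec_main (B : Formula) (α : ℕ) :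
    ∀ n : ℕ, ∀ u v : PTm, Reducible (Formula.subst α .zero B) u →
      (∀ m : Trm,
        Reducible (.imp (Formula.subst α m B) (Formula.subst α (.succ m) B)) (.tapp v m)) →
      Reducible (Formula.subst α (Trm.num n) B) (.natrec u v (Trm.num n)) := by
  intro n
  induction n with
  | zero =>
    intro u v hu hv
    have hsnu := (CR _).1 u hu
    have hsnv : NSN v :=
      nsn_of_image (fun s => .app (.tapp s .zero) u)
        (fun hs => .congAppL _ (.congTapp _ hs)) v
        ((CR _).1 _ (red_imp.mp (hv .zero) u hu))
    have aux : ∀ u, NSN u → ∀ v, NSN v → Reducible (Formula.subst α .zero B) u →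
        (∀ m : Trm,
          Reducible (.imp (Formula.subst α m B) (Formula.subst α (.succ m) B)) (.tapp v m)) →
        Reducible (Formula.subst α .zero B) (.natrec u v .zero) := by
      intro u hsnu
      induction hsnu with
      | intro u _ ihu =>
        intro v hsnv
        induction hsnv with
        | intro v hsv ihv =>
          intro hu hv
          refine (CR _).2.2 _ trivial ?_
          intro t' hs
          cases hs with
          | recZero => exact hu
          | congRecU _ _ hstep =>
            exact ihu _ hstep v (Acc.intro v hsv) ((CR _).2.1 _ _ hu hstep) hv
          | congRecV _ _ hstep =>
            exact ihv _ hstep hu (fun m => (CR _).2.1 _ _ (hv m) (.congTapp m hstep))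
    exact aux u hsnu v hsnv hu hv
  | succ n ihn =>
    intro u v hu hv
    have hsnu := (CR _).1 u hu
    have hsnv : NSN v :=
      nsn_of_image (fun s => .app (.tapp s .zero) u)
        (fun hs => .congAppL _ (.congTapp _ hs)) v
        ((CR _).1 _ (red_imp.mp (hv .zero) u hu))
    have aux : ∀ u, NSN u → ∀ v, NSN v → Reducible (Formula.subst α .zero B) u →
        (∀ m : Trm,
          Reducible (.imp (Formula.subst α m B) (Formula.subst α (.succ m) B)) (.tapp v m)) →
        Reducible (Formula.subst α (.succ (Trm.num n)) B)
          (.natrec u v (.succ (Trm.num n))) := by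
      intro u hsnu
      induction hsnu with
      | intro u _ ihu =>
        intro v hsnv
        induction hsnv with
        | intro v hsv ihv =>
          intro hu hv
          refine (CR _).2.2 _ trivial ?_
          intro t' hs
          have hgen : ∀ mn : Trm, mn = Trm.num n →
              NStep (.natrec u v (.succ mn)) t' →
              Reducible (Formula.subst α (.succ (Trm.num n)) B) t' := by
            intro mn hmn hs
            cases hs with
            | recSucc _ _ k =>
              obtain rfl := Trm.num_inj hmn
              exact red_imp.mp (hv (Trm.num k)) _ (ihn u v hu hv)
            | congRecU _ _ hstep =>
              subst hmn
              exact ihu _ hstep v (Acc.intro v hsv) ((CR _).2.1 _ _ hu hstep) hv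
            | congRecV _ _ hstep =>
              subst hmn
              exact ihv _ hstep hu (fun m => (CR _).2.1 _ _ (hv m) (.congTapp m hstep))
          exact hgen _ rfl hs
    exact aux u hsnu v hsnv hu hv

/-- if u is reducible of type B(0) and, for every arithmetic
    term m, v m is reducible of type B(m) → B(S m), then for every numeral n
    the term rec u v n is reducible of type B(n). -/
theorem rec_reducible (B : Formula) (α : ℕ) (u v : PTm)
    (hu : Reducible (Formula.subst α .zero B) u)
    (hv : ∀ m : Trm,
      Reducible (.imp (Formula.subst α m B) (Formula.subst α (.succ m) B)) (.tapp v m)) :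
    ∀ n : ℕ, Reducible (Formula.subst α (Trm.num n) B) (.natrec u v (Trm.num n)) := by
  intro n
  exact rec_main B α n u v hu hv
end
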